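/- arXiv:1308.0974 — 3 statements merged into one kernel-verified Lean document; each statement's English description precedes it below -/
import Mathlib

section
/- The double antinorm equals the original norm: for every x in X, ||x||_{a,a} = ||x||, where ||·||_{a,a} is the antinorm of the normed space (X, ||·||_a) with respect to the same symplectic form. -/
/-!
The antinorm of `‖·‖` at `y` is the operator norm of the functional `ω (·) y = -ω y`.
Nondegeneracy in finite dimension makes `y ↦ ω y` a bijection onto the dual, so the double
antinorm at `x` is the supremum of `f x` over unit functionals `f`, which is `‖x‖` by Hahn–Banach.
-/

noncomputable def antinormF {X : Type*} [NormedAddCommGroup X] [NormedSpace ℝ X]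
    (ω : X →ₗ[ℝ] X →ₗ[ℝ] ℝ) (N : X → ℝ) (x : X) : ℝ :=
  sSup {r : ℝ | ∃ y : X, N y = 1 ∧ r = ω y x}

namespace StrongDual

variable {E : Type*} [NormedAddCommGroup E] [NormedSpace ℝ E]

theorem sSup_apply_sphere_eq_norm (f : StrongDual ℝ E) :
    sSup {r : ℝ | ∃ y : E, ‖y‖ = 1 ∧ r = f y} = ‖f‖ := by
  rw [← f.sSup_sphere_eq_norm]
  apply csSup_eq_csSup_of_forall_exists_le
  · rintro _ ⟨y, hy, rfl⟩
    exact ⟨‖f y‖, ⟨y, by simpa using hy, rfl⟩, le_abs_self _⟩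
  · rintro _ ⟨y, hy, rfl⟩
    rw [mem_sphere_zero_iff_norm] at hy
    rcases le_total 0 (f y) with h | h
    · exact ⟨f y, ⟨y, hy, rfl⟩, (Real.norm_of_nonneg h).le⟩
    · exact ⟨f (-y), ⟨-y, by rwa [norm_neg], rfl⟩, by simp [Real.norm_of_nonpos h]⟩

theorem sSup_sphere_dual_apply_eq_norm (x : E) :
    sSup {r : ℝ | ∃ f : StrongDual ℝ E, ‖f‖ = 1 ∧ r = f x} = ‖x‖ := by
  rcases subsingleton_or_nontrivial E with _ | _
  · simp [Subsingleton.elim x 0, Subsingleton.elim _ (0 : StrongDual ℝ E)]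
  · obtain ⟨g, hg, hgx⟩ := exists_dual_vector' ℝ x
    refine IsGreatest.csSup_eq ⟨⟨g, hg, hgx.symm⟩, ?_⟩
    rintro _ ⟨f, hf, rfl⟩
    simpa [hf] using (le_abs_self (f x)).trans (f.le_opNorm x)

end StrongDual

section BilinearForm

variable {X : Type*} [NormedAddCommGroup X] [NormedSpace ℝ X] [FiniteDimensional ℝ X]
  (ω : X →ₗ[ℝ] X →ₗ[ℝ] ℝ)

theorem antinormF_norm_eq_norm_flip (y : X) :
    antinormF ω (‖·‖) y = ‖LinearMap.toContinuousLinearMap (ω.flip y)‖ :=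
  StrongDual.sSup_apply_sphere_eq_norm (LinearMap.toContinuousLinearMap (ω.flip y))

theorem antinormF_norm_eq_norm_of_skew (hskew : ∀ x y : X, ω x y = -ω y x) (y : X) :
    antinormF ω (‖·‖) y = ‖LinearMap.toContinuousLinearMap (ω y)‖ := by
  have hflip : ω.flip y = -ω y := LinearMap.ext fun z => hskew z y
  rw [antinormF_norm_eq_norm_flip, hflip, map_neg, norm_neg]

theorem surjective_toContinuousLinearMap_of_nondegenerate
    (hnd : ∀ x : X, (∀ y : X, ω x y = 0) → x = 0) :
    Function.Surjective fun y => LinearMap.toContinuousLinearMap (ω y) := by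
  have hinj : Function.Injective ω := by
    rw [← LinearMap.ker_eq_bot, LinearMap.ker_eq_bot']
    exact fun x hx => hnd x fun y => by simp [hx]
  have hsurj : Function.Surjective ω :=
    (LinearMap.injective_iff_surjective_of_finrank_eq_finrank
      Subspace.dual_finrank_eq.symm).mp hinj
  exact LinearMap.toContinuousLinearMap.surjective.comp hsurj

end BilinearForm

theorem stmt4_general {X : Type*} [NormedAddCommGroup X] [NormedSpace ℝ X]
    [FiniteDimensional ℝ X]
    (ω : X →ₗ[ℝ] X →ₗ[ℝ] ℝ)
    (hskew : ∀ x y : X, ω x y = - ω y x)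
    (hnd : ∀ x : X, (∀ y : X, ω x y = 0) → x = 0)
    (x : X) :
    antinormF ω (antinormF ω (fun y => ‖y‖)) x = ‖x‖ := by
  show sSup {r : ℝ | ∃ y : X, antinormF ω (‖·‖) y = 1 ∧ r = ω y x} = ‖x‖
  simp_rw [antinormF_norm_eq_norm_of_skew ω hskew]
  rw [← StrongDual.sSup_sphere_dual_apply_eq_norm x]
  refine congrArg sSup (Set.ext fun r => ?_)
  exact ((surjective_toContinuousLinearMap_of_nondegenerate ω hnd).exists
    (p := fun f => ‖f‖ = 1 ∧ r = f x)).symm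

/-- In a smooth, strictly convex even-dimensional real normed space with a
nondegenerate symplectic form, the antinorm of the antinorm is the original norm:
`‖x‖_{a,a} = ‖x‖` for all `x`. -/
theorem stmt4 {X : Type*} [NormedAddCommGroup X] [NormedSpace ℝ X]
    [FiniteDimensional ℝ X] [Nontrivial X] [StrictConvexSpace ℝ X]
    (ω : X →ₗ[ℝ] X →ₗ[ℝ] ℝ)
    (hskew : ∀ x y : X, ω x y = - ω y x)
    (hnd : ∀ x : X, (∀ y : X, ω x y = 0) → x = 0)
    (heven : Even (Module.finrank ℝ X))
    (hsmooth : ∀ x : X, x ≠ 0 → ∃! f : X →L[ℝ] ℝ, ‖f‖ = 1 ∧ f x = ‖x‖)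
    (x : X) :
    antinormF ω (antinormF ω (fun y => ‖y‖)) x = ‖x‖ :=
  stmt4_general ω hskew hnd x
end

section
/- For any convex body M in X containing the origin in its interior, the right semi-polar of the left semi-polar of M equals M: (M_°)° = M. -/
/-!
The inclusion `M ⊆ (M_°)°` is immediate. Conversely, a point `z ∉ M` is strictly separated
from the closed convex set `M` by a continuous functional; since `0 ∈ M` it can be scaled to
be `≤ 1` on `M` and `> 1` at `z`. Its Riesz representative `y` then lies in `M_°` while
`[z, y] > 1`, so `z ∉ (M_°)°`.
-/

section SemiPolar

variable {E : Type*}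

/-- `M°` in the paper. -/
def rightSemiPolar (sip : E → E → ℝ) (s : Set E) : Set E :=
  {y | ∀ m ∈ s, sip y m ≤ 1}

/-- `M_°` in the paper. -/
def leftSemiPolar (sip : E → E → ℝ) (s : Set E) : Set E :=
  {y | ∀ m ∈ s, sip m y ≤ 1}

theorem subset_rightSemiPolar_leftSemiPolar (sip : E → E → ℝ) (s : Set E) :
    s ⊆ rightSemiPolar sip (leftSemiPolar sip s) :=
  fun _ hm _ hy => hy _ hm

variable [TopologicalSpace E] [AddCommGroup E] [Module ℝ E] [IsTopologicalAddGroup E]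
  [ContinuousSMul ℝ E] [LocallyConvexSpace ℝ E]

theorem exists_strongDual_le_one_one_lt_of_notMem {s : Set E} {z : E} (hs : Convex ℝ s)
    (hsc : IsClosed s) (h0 : (0 : E) ∈ s) (hz : z ∉ s) :
    ∃ f : StrongDual ℝ E, (∀ m ∈ s, f m ≤ 1) ∧ 1 < f z := by
  obtain ⟨f, u, hfs, hfz⟩ := geometric_hahn_banach_closed_point hs hsc hz
  have hu : 0 < u := by simpa using hfs 0 h0
  refine ⟨u⁻¹ • f, fun m hm => ?_, ?_⟩
  · simpa [inv_mul_le_iff₀ hu] using (hfs m hm).le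
  · simpa [lt_inv_mul_iff₀ hu] using hfz

theorem rightSemiPolar_leftSemiPolar_eq {sip : E → E → ℝ}
    (hrep : ∀ f : StrongDual ℝ E, ∃ y, ∀ x, f x = sip x y) {s : Set E} (hs : Convex ℝ s)
    (hsc : IsClosed s) (h0 : (0 : E) ∈ s) :
    rightSemiPolar sip (leftSemiPolar sip s) = s := by
  refine (subset_rightSemiPolar_leftSemiPolar sip s).antisymm' fun z hz => ?_
  by_contra hzs
  obtain ⟨f, hfs, hfz⟩ := exists_strongDual_le_one_one_lt_of_notMem hs hsc h0 hzs
  obtain ⟨y, hy⟩ := hrep f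
  have hy_mem : y ∈ leftSemiPolar sip s := fun m hm => hy m ▸ hfs m hm
  exact (hy z ▸ hfz).not_ge (hz y hy_mem)

end SemiPolar

theorem stmt18_general {X : Type*} [NormedAddCommGroup X] [NormedSpace ℝ X]
    (sip : X → X → ℝ)
    -- generalized Riesz representation: every linear functional has the form `[·, y]`
    (hriesz : ∀ f : X →ₗ[ℝ] ℝ, ∃ y : X, ∀ x : X, f x = sip x y)
    (M : Set X) (hMcomp : IsCompact M) (hMconv : Convex ℝ M)
    (hM0 : (0 : X) ∈ interior M) :
    {z : X | ∀ y ∈ {y : X | ∀ m ∈ M, sip m y ≤ 1}, sip z y ≤ 1} = M :=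
  rightSemiPolar_leftSemiPolar_eq (fun f => hriesz f.toLinearMap) hMconv hMcomp.isClosed
    (interior_subset hM0)

/-- In a smooth, strictly convex finite-dimensional real normed space with
semi-inner product `sip` induced by the norm (so that every linear functional is
represented as `[·, y]` for some `y`), for any convex body `M` containing the origin in
its interior one has `(M_°)° = M`, where
`M_° = {y : [m,y] ≤ 1 for all m ∈ M}` and `N° = {z : [z,y] ≤ 1 for all y ∈ N}`. -/
theorem stmt18 {X : Type*} [NormedAddCommGroup X] [NormedSpace ℝ X]
    [FiniteDimensional ℝ X] [StrictConvexSpace ℝ X]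
    (sip : X → X → ℝ)
    (hadd : ∀ x y z : X, sip (x + y) z = sip x z + sip y z)
    (hsmul : ∀ (c : ℝ) (x y : X), sip (c • x) y = c * sip x y)
    (hsmul' : ∀ (c : ℝ) (x y : X), sip x (c • y) = c * sip x y)
    (hsq : ∀ x : X, sip x x = ‖x‖ ^ 2)
    (hcs : ∀ x y : X, |sip x y| ≤ ‖x‖ * ‖y‖)
    -- generalized Riesz representation: every linear functional has the form `[·, y]`
    (hriesz : ∀ f : X →ₗ[ℝ] ℝ, ∃ y : X, ∀ x : X, f x = sip x y)
    (M : Set X) (hMcomp : IsCompact M) (hMconv : Convex ℝ M)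
    (hM0 : (0 : X) ∈ interior M) :
    {z : X | ∀ y ∈ {y : X | ∀ m ∈ M, sip m y ≤ 1}, sip z y ≤ 1} = M :=
  stmt18_general sip hriesz M hMcomp hMconv hM0
end

section
/- If the semi-inner product satisfies: for all x, m in X, [x,m] ≤ 1 implies [m,x] ≤ 1 (equivalently, m ∈ (m°)° for every m), then [·,·] is symmetric, i.e., [x,m] = [m,x] for all x, m, and hence is an inner product. -/
/-! Scaling `x` by `c` turns the hypothesis into `c * [x,m] ≤ 1 → c * [m,x] ≤ 1` for every real `c`.
Such an implication forces `[m,x]` to lie between `0` and `[x,m]`; with the roles of `x` and `m`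
exchanged, the two numbers coincide. -/

lemma nonneg_and_le_of_forall_mul_le_one {a b : ℝ} (ha : 0 ≤ a)
    (h : ∀ c : ℝ, c * a ≤ 1 → c * b ≤ 1) : 0 ≤ b ∧ b ≤ a := by
  constructor
  · by_contra! hb
    have hca : 2 / b * a ≤ 1 :=
      (mul_nonpos_of_nonpos_of_nonneg (div_nonpos_of_nonneg_of_nonpos zero_le_two hb.le) ha).trans
        zero_le_one
    have := h (2 / b) hca
    rw [div_mul_cancel₀ _ hb.ne] at this
    norm_num at this
  · by_contra! hab
    have hpos : 0 < a + b := by linarith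
    have hca : 2 / (a + b) * a ≤ 1 := by
      rw [div_mul_eq_mul_div, div_le_one hpos]; linarith
    have hcb : 1 < 2 / (a + b) * b := by
      rw [div_mul_eq_mul_div, one_lt_div hpos]; linarith
    exact (h _ hca).not_gt hcb

lemma mem_uIcc_zero_of_forall_mul_le_one {a b : ℝ} (h : ∀ c : ℝ, c * a ≤ 1 → c * b ≤ 1) :
    b ∈ Set.uIcc 0 a := by
  rw [Set.mem_uIcc]
  rcases le_total 0 a with ha | ha
  · exact Or.inl (nonneg_and_le_of_forall_mul_le_one ha h)
  · have hneg : ∀ c : ℝ, c * -a ≤ 1 → c * -b ≤ 1 := fun c hc => by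
      simpa only [neg_mul_comm] using h (-c) (by rwa [neg_mul_comm])
    obtain ⟨hb, hba⟩ := nonneg_and_le_of_forall_mul_le_one (neg_nonneg.mpr ha) hneg
    exact Or.inr ⟨neg_le_neg_iff.mp hba, neg_nonneg.mp hb⟩

lemma eq_of_forall_mul_le_one_iff {a b : ℝ} (h : ∀ c : ℝ, c * a ≤ 1 ↔ c * b ≤ 1) : a = b := by
  have hb := Set.mem_uIcc.mp (mem_uIcc_zero_of_forall_mul_le_one fun c => (h c).mp)
  have ha := Set.mem_uIcc.mp (mem_uIcc_zero_of_forall_mul_le_one fun c => (h c).mpr)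
  rcases hb with hb | hb <;> rcases ha with ha | ha <;> linarith

theorem stmt19_general {X : Type*} [NormedAddCommGroup X] [NormedSpace ℝ X]
    (sip : X → X → ℝ)
    (hsmul : ∀ (c : ℝ) (x y : X), sip (c • x) y = c * sip x y)
    (hsmul' : ∀ (c : ℝ) (x y : X), sip x (c • y) = c * sip x y)
    (hmain : ∀ x m : X, sip x m ≤ 1 → sip m x ≤ 1) :
    ∀ x m : X, sip x m = sip m x := by
  have hscaled : ∀ (x m : X) (c : ℝ), c * sip x m ≤ 1 → c * sip m x ≤ 1 := fun x m c h => by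
    simpa only [hsmul'] using hmain (c • x) m (by rwa [hsmul])
  exact fun x m => eq_of_forall_mul_le_one_iff fun c => ⟨hscaled x m c, hscaled m x c⟩

/-- Let `sip` be the semi-inner product induced by the norm of a smooth,
strictly convex finite-dimensional real normed space (additive and homogeneous in the
first variable, homogeneous in the second, continuous, with `[x,x] = ‖x‖²` and the
Cauchy–Schwarz inequality). If `[x,m] ≤ 1` implies `[m,x] ≤ 1` for all `x, m`
(equivalently, `m ∈ (m°)°` for every `m`), then `sip` is symmetric, hence an inner
product. -/
theorem stmt19 {X : Type*} [NormedAddCommGroup X] [NormedSpace ℝ X]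
    [FiniteDimensional ℝ X] [StrictConvexSpace ℝ X]
    (sip : X → X → ℝ)
    (hadd : ∀ x y z : X, sip (x + y) z = sip x z + sip y z)
    (hsmul : ∀ (c : ℝ) (x y : X), sip (c • x) y = c * sip x y)
    (hsmul' : ∀ (c : ℝ) (x y : X), sip x (c • y) = c * sip x y)
    (hcont : Continuous fun p : X × X => sip p.1 p.2)
    (hsq : ∀ x : X, sip x x = ‖x‖ ^ 2)
    (hcs : ∀ x y : X, (sip x y) ^ 2 ≤ sip x x * sip y y)
    (hmain : ∀ x m : X, sip x m ≤ 1 → sip m x ≤ 1) :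
    ∀ x m : X, sip x m = sip m x :=
  stmt19_general sip hsmul hsmul' hmain
end
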